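/- Let n ≥ 1, let T be the shift map on ([0,1]^n)^ℤ and let d_T(x,y)=∑_{k∈ℤ} 2^{−|k|} d(x_k,y_k), where d is the standard Euclidean metric on [0,1]^n. Then the upper metric mean dimension satisfies mdim(([0,1]^n)^ℤ, d_T, T) = n. -/

import Mathlib

open Filter Set Metric Function
open scoped ENNReal NNReal

noncomputable section

universe u

/-- A pair `(X̂, Y)` of random variables on a probability space `(Ω, P)` satisfying
condition `(*)_{n,ε,μ}`: `X̂` has law `μ` and the expected average distortion
`E[(1/n) ∑_{k<n} d(T^k X̂, Y_k)]` is at most `ε`. -/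
structure DistortionPair {X : Type u} [MetricSpace X] [MeasurableSpace X]
    (T : X → X) (μ : MeasureTheory.Measure X) (ε : ℝ) (n : ℕ) where
  Ω : Type u
  [mΩ : MeasurableSpace Ω]
  P : MeasureTheory.Measure Ω
  probP : MeasureTheory.IsProbabilityMeasure P
  Xh : Ω → X
  Y : Ω → Fin n → X
  measXh : Measurable Xh
  measY : Measurable Y
  law : MeasureTheory.Measure.map Xh P = μ
  distortion : ∫ ω, (∑ k : Fin n, dist (T^[(k : ℕ)] (Xh ω)) (Y ω k)) / n ∂P ≤ ε

open MeasureTheory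

section Defs

variable {X : Type u} [MetricSpace X]

/-- The Bowen dynamical distance `d_n(x,y) = max_{0 ≤ k ≤ n-1} d(T^k x, T^k y)`. -/
def dynDist (T : X → X) (n : ℕ) (x y : X) : ℝ :=
  (((Finset.range n).sup (fun k => nndist (T^[k] x) (T^[k] y)) : ℝ≥0) : ℝ)

/-- The `(n,ε)`-dynamical ball around `x`. -/
def dynBall (T : X → X) (n : ℕ) (x : X) (ε : ℝ) : Set X :=
  {y | dynDist T n x y < ε}

/-- `N_d(n,ε)`: the maximal cardinality of an `(n,ε)`-separated subset of `X`. -/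
def dynSepNum (T : X → X) (n : ℕ) (ε : ℝ) : ℕ :=
  sSup {m | ∃ E : Finset X, (∀ x ∈ E, ∀ y ∈ E, x ≠ y → ε < dynDist T n x y) ∧ E.card = m}

/-- `S(X,d,ε) = limsup_n (1/n) log N_d(n,ε)`. -/
def dynS (T : X → X) (ε : ℝ) : ℝ≥0∞ :=
  Filter.atTop.limsup fun n : ℕ =>
    ENNReal.ofReal (Real.log (dynSepNum T n ε)) / (n : ℝ≥0∞)

/-- The upper metric mean dimension `mdim(X,d,T) = limsup_{ε → 0⁺} S(X,d,ε)/|log ε|`. -/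
def mdim (T : X → X) : ℝ≥0∞ :=
  Filter.limsup (fun ε : ℝ => dynS T ε / ENNReal.ofReal |Real.log ε|)
    (nhdsWithin 0 (Set.Ioi 0))

/-- The topological entropy `h_top(X,T) = lim_{ε → 0⁺} S(X,d,ε)`
(the limit exists by monotonicity, hence equals the `limsup`). -/
def htop (T : X → X) : ℝ≥0∞ :=
  Filter.limsup (fun ε : ℝ => dynS T ε) (nhdsWithin 0 (Set.Ioi 0))

/-- `N_μ(n,ε,δ)`: the minimal number of `(n,ε)`-dynamical balls needed to cover a set of
`μ`-measure strictly bigger than `1 - δ`. -/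
def dynCovNum [MeasurableSpace X] (T : X → X) (μ : Measure X) (n : ℕ) (ε δ : ℝ) : ℕ :=
  sInf {m | ∃ F : Finset X, F.card = m ∧
    ENNReal.ofReal (1 - δ) < μ (⋃ x ∈ F, dynBall T n x ε)}

/-- `h_μ(ε,T,δ) = limsup_n (1/n) log N_μ(n,ε,δ)`. -/
def dynH [MeasurableSpace X] (T : X → X) (μ : Measure X) (ε δ : ℝ) : ℝ≥0∞ :=
  Filter.atTop.limsup fun n : ℕ =>
    ENNReal.ofReal (Real.log (dynCovNum T μ n ε δ)) / (n : ℝ≥0∞)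

/-- The average dynamical distance `d̃_n(x,y) = (1/n) ∑_{k<n} d(T^k x, T^k y)`. -/
def avgDist (T : X → X) (n : ℕ) (x y : X) : ℝ :=
  (∑ k ∈ Finset.range n, dist (T^[k] x) (T^[k] y)) / n

/-- The `(n,ε)`-average dynamical ball around `x`. -/
def avgBall (T : X → X) (n : ℕ) (x : X) (ε : ℝ) : Set X :=
  {y | avgDist T n x y < ε}

/-- `Ñ_d(n,ε)`: the maximal cardinality of an `(n,ε)`-average separated subset of `X`. -/
def avgSepNum (T : X → X) (n : ℕ) (ε : ℝ) : ℕ :=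
  sSup {m | ∃ E : Finset X, (∀ x ∈ E, ∀ y ∈ E, x ≠ y → ε < avgDist T n x y) ∧ E.card = m}

/-- `S̃(X,d,ε) = limsup_n (1/n) log Ñ_d(n,ε)`. -/
def avgS (T : X → X) (ε : ℝ) : ℝ≥0∞ :=
  Filter.atTop.limsup fun n : ℕ =>
    ENNReal.ofReal (Real.log (avgSepNum T n ε)) / (n : ℝ≥0∞)

/-- `Ñ_μ(n,ε,δ)`: the minimal number of `(n,ε)`-average dynamical balls needed to cover a set
of `μ`-measure strictly bigger than `1 - δ`. -/
def avgCovNum [MeasurableSpace X] (T : X → X) (μ : Measure X) (n : ℕ) (ε δ : ℝ) : ℕ :=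
  sInf {m | ∃ F : Finset X, F.card = m ∧
    ENNReal.ofReal (1 - δ) < μ (⋃ x ∈ F, avgBall T n x ε)}

/-- `h̃_μ(ε,T,δ) = limsup_n (1/n) log Ñ_μ(n,ε,δ)`. -/
def avgH [MeasurableSpace X] (T : X → X) (μ : Measure X) (ε δ : ℝ) : ℝ≥0∞ :=
  Filter.atTop.limsup fun n : ℕ =>
    ENNReal.ofReal (Real.log (avgCovNum T μ n ε δ)) / (n : ℝ≥0∞)

/-- `h̃_μ(T,δ) = lim_{ε → 0⁺} h̃_μ(ε,T,δ)` (the limit exists by monotonicity, hence equals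
the `limsup`). -/
def avgHlim [MeasurableSpace X] (T : X → X) (μ : Measure X) (δ : ℝ) : ℝ≥0∞ :=
  Filter.limsup (fun ε : ℝ => avgH T μ ε δ) (nhdsWithin 0 (Set.Ioi 0))

end Defs

/-- `N(ε)`: the maximal cardinality of an `ε`-separated subset of `Y`. -/
def sepNum (Y : Type*) [MetricSpace Y] (ε : ℝ) : ℕ :=
  sSup {m | ∃ E : Finset Y, (∀ x ∈ E, ∀ y ∈ E, x ≠ y → ε < dist x y) ∧ E.card = m}

/-- The upper box (Minkowski) dimension `limsup_{ε → 0⁺} log N(ε) / |log ε|`. -/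
def upperBoxDim (Y : Type*) [MetricSpace Y] : ℝ≥0∞ :=
  Filter.limsup
    (fun ε : ℝ => ENNReal.ofReal (Real.log (sepNum Y ε)) / ENNReal.ofReal |Real.log ε|)
    (nhdsWithin 0 (Set.Ioi 0))

section Entropy

variable {X : Type u} [MeasurableSpace X]

/-- The entropy contribution `-μ(A) log μ(A)` of one cell (nonnegative when `μ(A) ≤ 1`). -/
def cellEnt (μ : Measure X) (A : Set X) : ℝ≥0∞ :=
  ENNReal.ofReal (-((μ A).toReal * Real.log (μ A).toReal))

/-- `H_μ(P ∨ T⁻¹P ∨ ⋯ ∨ T^{-(n-1)}P)` for the finite partition `P` indexed by `Fin m`. -/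
def refinedEnt (μ : Measure X) (T : X → X) {m : ℕ} (P : Fin m → Set X) (n : ℕ) : ℝ≥0∞ :=
  ∑ s : Fin n → Fin m, cellEnt μ (⋂ k : Fin n, T^[(k : ℕ)] ⁻¹' P (s k))

/-- `h_μ(P,T) = inf_{n ≥ 1} (1/n) H_μ(Pⁿ)`. -/
def entPart (μ : Measure X) (T : X → X) {m : ℕ} (P : Fin m → Set X) : ℝ≥0∞ :=
  ⨅ n : ℕ, refinedEnt μ T P (n + 1) / ((n + 1 : ℕ) : ℝ≥0∞)

/-- The measure-theoretic (Kolmogorov–Sinai) entropy `h_μ(T) = sup_P h_μ(P,T)`, the supremum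
over all finite measurable partitions of `X`. -/
def KSentropy (μ : Measure X) (T : X → X) : ℝ≥0∞ :=
  ⨆ (m : ℕ) (P : Fin m → Set X) (_ : ∀ i, MeasurableSet (P i))
    (_ : Pairwise (Function.onFun Disjoint P)) (_ : (⋃ i, P i) = Set.univ),
    entPart μ T P

end Entropy

section RD

open scoped Classical in
/-- The Kullback–Leibler divergence `∫ log (dp/dq) dp` (with value `∞` if `p` is not
absolutely continuous w.r.t. `q` or the integrand is not integrable). -/
def klDiv {α : Type*} [MeasurableSpace α] (p q : Measure α) : ℝ≥0∞ :=
  if p ≪ q ∧ Integrable (fun x => Real.log (p.rnDeriv q x).toReal) p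
  then ENNReal.ofReal (∫ x, Real.log (p.rnDeriv q x).toReal ∂p)
  else ⊤

/-- The mutual information `I(U,V)`: the Kullback–Leibler divergence of the joint law of
`(U,V)` with respect to the product of the laws of `U` and `V`. -/
def mutualInfo {Ω α β : Type*} [MeasurableSpace Ω] [MeasurableSpace α] [MeasurableSpace β]
    (P : Measure Ω) (U : Ω → α) (V : Ω → β) : ℝ≥0∞ :=
  klDiv (Measure.map (fun ω => (U ω, V ω)) P)
    ((Measure.map U P).prod (Measure.map V P))

/-- The rate distortion function `R_μ(ε) = inf (1/n) I(X̂,Y)`, the infimum over all `n ≥ 1`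
and all pairs `(X̂,Y)` satisfying condition `(*)_{n,ε,μ}`. -/
def rateDistortion {X : Type u} [MetricSpace X] [MeasurableSpace X]
    (T : X → X) (μ : Measure X) (ε : ℝ) : ℝ≥0∞ :=
  ⨅ (n : ℕ) (_ : 0 < n) (pair : DistortionPair T μ ε n),
    @mutualInfo pair.Ω X (Fin n → X) pair.mΩ _ _ pair.P pair.Xh pair.Y / (n : ℝ≥0∞)

end RD

end

/-!
Since the weights `2^{-|k|}` are summable, there is `K = K(ε)` such that two sequences whose
coordinates are `O(ε)`-close at all times `|k| ≤ K` are `ε`-close. Hence the points of an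
`(N, ε)`-separated set are told apart by the cubes of side `≍ ε` that their coordinates occupy at
the times `-K, …, N + K - 1`, and `N_d(N, ε) ≤ (C/ε)^{n(N + 2K)}`. Conversely, `d_T` dominates the
distance of the `0`-th coordinates, so the sequences that take values in the grid
`{0, 1/q, …, 1}^n` at the times `0, …, N - 1`, with `q ≈ 1/(2ε)`, form an `(N, ε)`-separated set
of `(q + 1)^{nN}` points. Thus `S(X, d_T, ε) = n |log ε| + O(1)`.
-/

noncomputable section

open scoped Topology

section Separated

variable {X : Type*} [MetricSpace X] (T : X → X)

def IsDynSeparated (N : ℕ) (ε : ℝ) (E : Finset X) : Prop :=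
  ∀ x ∈ E, ∀ y ∈ E, x ≠ y → ε < dynDist T N x y

variable {T}

lemma dist_iterate_le_dynDist {N j : ℕ} (hj : j < N) (x y : X) :
    dist (T^[j] x) (T^[j] y) ≤ dynDist T N x y := by
  rw [dynDist, ← coe_nndist]
  exact_mod_cast Finset.le_sup (f := fun k => nndist (T^[k] x) (T^[k] y)) (Finset.mem_range.2 hj)

lemma dynDist_le_of_forall {N : ℕ} {x y : X} {e : ℝ} (he : 0 ≤ e)
    (h : ∀ j < N, dist (T^[j] x) (T^[j] y) ≤ e) : dynDist T N x y ≤ e := by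
  rw [dynDist, ← Real.coe_toNNReal e he, NNReal.coe_le_coe]
  refine Finset.sup_le fun j hj => ?_
  rw [← NNReal.coe_le_coe, coe_nndist, Real.coe_toNNReal e he]
  exact h j (Finset.mem_range.1 hj)

lemma natCast_dynSepNum_le {N : ℕ} {ε B : ℝ}
    (hB : ∀ E, IsDynSeparated T N ε E → (E.card : ℝ) ≤ B) :
    (dynSepNum T N ε : ℝ) ≤ B := by
  have hB0 : 0 ≤ B := by simpa using hB ∅ (by simp [IsDynSeparated])
  refine le_trans (Nat.cast_le.2 (csSup_le' ?_)) (Nat.floor_le hB0)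
  rintro _ ⟨E, hE, rfl⟩
  exact Nat.le_floor (hB E hE)

lemma card_le_dynSepNum {N : ℕ} {ε B : ℝ}
    (hB : ∀ E, IsDynSeparated T N ε E → (E.card : ℝ) ≤ B) {E : Finset X}
    (hE : IsDynSeparated T N ε E) : E.card ≤ dynSepNum T N ε :=
  le_csSup ⟨⌊B⌋₊, by rintro _ ⟨E, hE, rfl⟩; exact Nat.le_floor (hB E hE)⟩
    ⟨E, hE, rfl⟩

lemma dynS_le_ofReal_log {ε B : ℝ} (hB : 1 ≤ B) (k : ℕ)
    (h : ∀ N, (dynSepNum T N ε : ℝ) ≤ B ^ (N + k)) :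
    dynS T ε ≤ ENNReal.ofReal (Real.log B) := by
  have hlim : Tendsto (fun N : ℕ => ENNReal.ofReal ((1 + k / N) * Real.log B)) atTop
      (𝓝 (ENNReal.ofReal (Real.log B))) := by
    refine ENNReal.tendsto_ofReal ?_
    simpa using ((tendsto_const_div_atTop_nhds_zero_nat (k : ℝ)).const_add 1).mul_const
      (Real.log B)
  refine (limsup_le_limsup ?_).trans hlim.limsup_eq.le
  filter_upwards [eventually_gt_atTop 0] with N hN
  have hN' : (0 : ℝ) < N := Nat.cast_pos.2 hN
  have hlog : Real.log (dynSepNum T N ε) ≤ (N + k) * Real.log B := by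
    rcases (dynSepNum T N ε).eq_zero_or_pos with h0 | hpos
    · rw [h0, Nat.cast_zero, Real.log_zero]
      exact mul_nonneg (by positivity) (Real.log_nonneg hB)
    · calc Real.log (dynSepNum T N ε) ≤ Real.log (B ^ (N + k)) :=
            Real.log_le_log (Nat.cast_pos.2 hpos) (h N)
        _ = (N + k) * Real.log B := by rw [Real.log_pow]; push_cast; rfl
  rw [← ENNReal.ofReal_natCast, ← ENNReal.ofReal_div_of_pos hN']
  refine ENNReal.ofReal_le_ofReal ?_
  rw [div_le_iff₀ hN']
  calc Real.log (dynSepNum T N ε) ≤ (N + k) * Real.log B := hlog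
    _ = (1 + k / N) * Real.log B * N := by field_simp

lemma ofReal_log_le_dynS {ε B : ℝ} (hB : 0 < B) (h : ∀ N, B ^ N ≤ (dynSepNum T N ε : ℝ)) :
    ENNReal.ofReal (Real.log B) ≤ dynS T ε := by
  refine le_limsup_of_frequently_le' (Eventually.frequently ?_)
  filter_upwards [eventually_gt_atTop 0] with N hN
  have hN' : (0 : ℝ) < N := Nat.cast_pos.2 hN
  rw [← ENNReal.ofReal_natCast, ← ENNReal.ofReal_div_of_pos hN']
  refine ENNReal.ofReal_le_ofReal ?_
  rw [le_div_iff₀ hN', mul_comm, ← Real.log_pow]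
  exact Real.log_le_log (pow_pos hB N) (h N)

end Separated

lemma tendsto_ofReal_mul_log_div_abs_log (a : ℝ) {c : ℝ} (hc : 0 < c) :
    Tendsto (fun ε : ℝ => ENNReal.ofReal (a * Real.log (c / ε)) / ENNReal.ofReal |Real.log ε|)
      (𝓝[>] 0) (𝓝 (ENNReal.ofReal a)) := by
  have habs : Tendsto (fun ε => |Real.log ε|) (𝓝[>] 0) atTop :=
    tendsto_abs_atBot_atTop.comp Real.tendsto_log_nhdsGT_zero
  have hlim : Tendsto (fun ε => a + a * Real.log c * |Real.log ε|⁻¹) (𝓝[>] 0) (𝓝 a) := by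
    simpa using (habs.inv_tendsto_atTop.const_mul (a * Real.log c)).const_add a
  refine (ENNReal.tendsto_ofReal hlim).congr' ?_
  filter_upwards [Ioo_mem_nhdsGT one_pos] with ε ⟨hε0, hε1⟩
  have hlog : Real.log ε < 0 := Real.log_neg hε0 hε1
  rw [← ENNReal.ofReal_div_of_pos (abs_pos.2 hlog.ne), abs_of_neg hlog,
    Real.log_div hc.ne' hε0.ne']
  congr 1
  field_simp [hlog.ne]
  ring

section WeightedSum

lemma tendsto_tsum_indicator_natAbs_gt {w : ℤ → ℝ} (hw : Summable w) :
    Tendsto (fun K : ℕ => ∑' k, {k : ℤ | K < k.natAbs}.indicator w k) atTop (𝓝 0) := by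
  have hpt (k : ℤ) :
      Tendsto (fun K : ℕ => {k : ℤ | K < k.natAbs}.indicator w k) atTop (𝓝 0) := by
    refine tendsto_const_nhds.congr' ?_
    filter_upwards [eventually_ge_atTop k.natAbs] with K hK
    simp [Set.indicator_of_notMem, hK.not_gt]
  simpa using tendsto_tsum_of_dominated_convergence hw.abs hpt
    (Eventually.of_forall fun K k => norm_indicator_le_norm_self _ _)

lemma tsum_mul_le_of_le_on_window {w f : ℤ → ℝ} (hw : Summable w) (hw0 : ∀ k, 0 ≤ w k)
    (hf0 : ∀ k, 0 ≤ f k) {h D : ℝ} (hfD : ∀ k, f k ≤ D) {K : ℕ}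
    (hfh : ∀ k : ℤ, k.natAbs ≤ K → f k ≤ h) :
    ∑' k, w k * f k ≤ h * ∑' k, w k + D * ∑' k, {k : ℤ | K < k.natAbs}.indicator w k := by
  have hh : 0 ≤ h := (hf0 0).trans (hfh 0 (by simp))
  have hwf : Summable fun k => w k * f k :=
    (hw.mul_left D).of_nonneg_of_le (fun k => mul_nonneg (hw0 k) (hf0 k))
      fun k => by rw [mul_comm D]; exact mul_le_mul_of_nonneg_left (hfD k) (hw0 k)
  have hwh := hw.mul_left h
  have hwD := (hw.indicator {k : ℤ | K < k.natAbs}).mul_left D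
  rw [← tsum_mul_left, ← tsum_mul_left, ← hwh.tsum_add hwD]
  refine hwf.tsum_le_tsum (fun k => ?_) (hwh.add hwD)
  by_cases hk : K < k.natAbs
  · simp only [Set.indicator_of_mem (show k ∈ {k : ℤ | K < k.natAbs} from hk)]
    nlinarith [hw0 k, hfD k]
  · simp only [Set.indicator_of_notMem (show k ∉ {k : ℤ | K < k.natAbs} from hk), mul_zero,
      add_zero, mul_comm h]
    exact mul_le_mul_of_nonneg_left (hfh k (not_lt.1 hk)) (hw0 k)

lemma summable_two_zpow_neg_abs : Summable fun k : ℤ => (2 : ℝ) ^ (-|k|) := by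
  refine summable_int_iff_summable_nat_and_neg.2 ⟨?_, ?_⟩ <;>
    simpa [zpow_neg, ← inv_pow] using summable_geometric_two

end WeightedSum

def shift {α : Type*} (x : ℤ → α) : ℤ → α := fun k => x (k + 1)

lemma iterate_shift_apply {α : Type*} (j : ℕ) (x : ℤ → α) (k : ℤ) :
    shift^[j] x k = x (k + j) := by
  induction j generalizing x with
  | zero => simp
  | succ j ih =>
    rw [Function.iterate_succ_apply, ih, shift]
    push_cast
    ring_nf

abbrev UnitCube (n : ℕ) := Fin n → Icc (0 : ℝ) 1

namespace UnitCube

variable {n : ℕ}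

def euclidDist (a b : UnitCube n) : ℝ := √(∑ i, ((a i : ℝ) - b i) ^ 2)

lemma euclidDist_nonneg (a b : UnitCube n) : 0 ≤ euclidDist a b := Real.sqrt_nonneg _

lemma abs_sub_le_euclidDist (a b : UnitCube n) (i : Fin n) :
    |(a i : ℝ) - b i| ≤ euclidDist a b := by
  rw [euclidDist, ← Real.sqrt_sq_eq_abs]
  exact Real.sqrt_le_sqrt <| Finset.single_le_sum (f := fun i => ((a i : ℝ) - b i) ^ 2)
    (fun i _ => sq_nonneg _) (Finset.mem_univ i)

lemma euclidDist_le_of_abs_sub_le {a b : UnitCube n} {h : ℝ} (hh : 0 ≤ h)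
    (hab : ∀ i, |(a i : ℝ) - b i| ≤ h) : euclidDist a b ≤ √n * h := by
  have hsum : ∑ i, ((a i : ℝ) - b i) ^ 2 ≤ n * h ^ 2 := by
    simpa using Finset.sum_le_sum fun i (_ : i ∈ Finset.univ) =>
      sq_le_sq' (abs_le.1 (hab i)).1 (abs_le.1 (hab i)).2
  calc euclidDist a b ≤ √(n * h ^ 2) := Real.sqrt_le_sqrt hsum
    _ = √n * h := by rw [Real.sqrt_mul (Nat.cast_nonneg n), Real.sqrt_sq hh]

lemma euclidDist_le_sqrt (a b : UnitCube n) : euclidDist a b ≤ √n := by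
  simpa using euclidDist_le_of_abs_sub_le zero_le_one fun i =>
    abs_sub_le_iff.2 ⟨by linarith [(a i).2.2, (b i).2.1], by linarith [(a i).2.1, (b i).2.2]⟩

def quantize (M : ℕ) (t : Icc (0 : ℝ) 1) : Fin (M + 1) :=
  ⟨⌊(t : ℝ) * M⌋₊, Nat.lt_succ_of_le <| Nat.floor_le_of_le <|
    mul_le_of_le_one_left (Nat.cast_nonneg M) t.2.2⟩

lemma abs_sub_le_of_quantize_eq {M : ℕ} (hM : 0 < M) {s t : Icc (0 : ℝ) 1}
    (h : quantize M s = quantize M t) : |(s : ℝ) - t| ≤ 1 / M := by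
  have hM' : (0 : ℝ) < M := Nat.cast_pos.2 hM
  have hfloor : ⌊(s : ℝ) * M⌋ = ⌊(t : ℝ) * M⌋ := by
    rw [← Int.natCast_floor_eq_floor (mul_nonneg s.2.1 hM'.le),
      ← Int.natCast_floor_eq_floor (mul_nonneg t.2.1 hM'.le)]
    exact congrArg (fun j : Fin (M + 1) => ((j : ℕ) : ℤ)) h
  have := (Int.abs_sub_lt_one_of_floor_eq_floor hfloor).le
  rw [← sub_mul, abs_mul, abs_of_pos hM'] at this
  rwa [le_div_iff₀ hM']

lemma euclidDist_le_of_quantize_eq {M : ℕ} (hM : 0 < M) {a b : UnitCube n}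
    (h : ∀ i, quantize M (a i) = quantize M (b i)) : euclidDist a b ≤ √n / M := by
  simpa [div_eq_mul_inv] using
    euclidDist_le_of_abs_sub_le (by positivity) fun i => abs_sub_le_of_quantize_eq hM (h i)

def level (q : ℕ) (j : Fin (q + 1)) : Icc (0 : ℝ) 1 :=
  ⟨j / q, by positivity,
    div_le_one_of_le₀ (Nat.cast_le.2 (Nat.lt_succ_iff.1 j.2)) q.cast_nonneg⟩

lemma one_div_le_abs_sub_level {q : ℕ} (hq : 0 < q) {i j : Fin (q + 1)} (hij : i ≠ j) :
    1 / (q : ℝ) ≤ |(level q i : ℝ) - level q j| := by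
  have hq' : (0 : ℝ) < q := Nat.cast_pos.2 hq
  have hone : (1 : ℝ) ≤ |((i : ℕ) : ℝ) - (j : ℕ)| := by
    have : ((i : ℕ) : ℤ) - (j : ℕ) ≠ 0 :=
      sub_ne_zero.2 (by exact_mod_cast Fin.val_ne_of_ne hij)
    exact_mod_cast Int.one_le_abs this
  simp only [level, ← sub_div, abs_div, abs_of_pos hq']
  exact div_le_div_of_nonneg_right hone hq'.le

section Shift

variable [MetricSpace (ℤ → UnitCube n)]

lemma card_le_of_isDynSeparated_shift {ε : ℝ} (hε : 0 ≤ ε) {M K N : ℕ} (hM : 0 < M)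
    (hwin : ∀ x y : ℤ → UnitCube n,
      (∀ k : ℤ, k.natAbs ≤ K → euclidDist (x k) (y k) ≤ √n / M) → dist x y ≤ ε)
    {E : Finset (ℤ → UnitCube n)} (hE : IsDynSeparated shift N ε E) :
    E.card ≤ ((M + 1) ^ n) ^ (N + 2 * K) := by
  let cells (x : ℤ → UnitCube n) : Fin (N + 2 * K) → Fin n → Fin (M + 1) :=
    fun j i => quantize M (x (j - K) i)
  have hinj : Set.InjOn cells E := by
    intro x hx y hy hxy
    by_contra hne
    refine (hE x hx y hy hne).not_ge (dynDist_le_of_forall hε fun t ht => hwin _ _ fun k hk => ?_)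
    rw [iterate_shift_apply, iterate_shift_apply]
    refine euclidDist_le_of_quantize_eq hM fun i => ?_
    have hj : (((k + t + K).toNat : ℕ) : ℤ) - K = k + t := by omega
    have hcell := congrFun (congrFun hxy ⟨(k + t + K).toNat, by omega⟩) i
    simp only [cells] at hcell
    rwa [hj] at hcell
  simpa [Fintype.card_fun, ← pow_mul] using
    Finset.card_le_card_of_injOn cells (fun _ _ => Finset.mem_coe.2 (Finset.mem_univ _)) hinj

variable (hm : ∀ x y : ℤ → UnitCube n,
  dist x y = ∑' k : ℤ, (2 : ℝ) ^ (-|k|) * euclidDist (x k) (y k))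
include hm

lemma euclidDist_le_dist (x y : ℤ → UnitCube n) : euclidDist (x 0) (y 0) ≤ dist x y := by
  have hs : Summable fun k : ℤ => (2 : ℝ) ^ (-|k|) * euclidDist (x k) (y k) :=
    (summable_two_zpow_neg_abs.mul_right √n).of_nonneg_of_le
      (fun k => mul_nonneg (by positivity) (euclidDist_nonneg _ _))
      fun k => mul_le_mul_of_nonneg_left (euclidDist_le_sqrt _ _) (by positivity)
  rw [hm]
  simpa using hs.le_tsum 0 fun k _ => mul_nonneg (by positivity) (euclidDist_nonneg _ _)

lemma euclidDist_le_dynDist_shift {N j : ℕ} (hj : j < N) (x y : ℤ → UnitCube n) :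
    euclidDist (x j) (y j) ≤ dynDist shift N x y := by
  simpa [iterate_shift_apply] using
    (euclidDist_le_dist hm (shift^[j] x) (shift^[j] y)).trans (dist_iterate_le_dynDist hj x y)

lemma exists_window : ∃ c > 0, ∀ ε > 0, ∃ K : ℕ, ∀ x y : ℤ → UnitCube n,
    (∀ k : ℤ, k.natAbs ≤ K → euclidDist (x k) (y k) ≤ c * ε) → dist x y ≤ ε := by
  set S := ∑' k : ℤ, (2 : ℝ) ^ (-|k|)
  have hS : 0 < S := summable_two_zpow_neg_abs.tsum_pos (fun k => by positivity) 0 (by simp)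
  refine ⟨(2 * S)⁻¹, by positivity, fun ε hε => ?_⟩
  have htail := (tendsto_tsum_indicator_natAbs_gt summable_two_zpow_neg_abs).const_mul √n
  obtain ⟨K, hK⟩ :=
    (htail.eventually (gt_mem_nhds (show √n * 0 < ε / 2 by simpa using half_pos hε))).exists
  refine ⟨K, fun x y hxy => ?_⟩
  rw [hm]
  calc _ ≤ (2 * S)⁻¹ * ε * S
        + √n * ∑' k, {k : ℤ | K < k.natAbs}.indicator (fun k : ℤ => (2 : ℝ) ^ (-|k|)) k :=
        tsum_mul_le_of_le_on_window summable_two_zpow_neg_abs (fun k => by positivity)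
          (fun k => euclidDist_nonneg _ _) (fun k => euclidDist_le_sqrt _ _) hxy
    _ ≤ ε := by
        have : (2 * S)⁻¹ * ε * S = ε / 2 := by field_simp
        linarith

lemma exists_isDynSeparated_shift {ε : ℝ} {q : ℕ} (hq : 0 < q) (hεq : ε * q < 1) (N : ℕ) :
    ∃ E : Finset (ℤ → UnitCube n),
      IsDynSeparated shift N ε E ∧ E.card = ((q + 1) ^ n) ^ N := by
  classical
  let point (g : Fin N → Fin n → Fin (q + 1)) : ℤ → UnitCube n :=
    fun k i => level q (if h : k.toNat < N then g ⟨k.toNat, h⟩ i else 0)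
  have hpoint (g : Fin N → Fin n → Fin (q + 1)) (j : Fin N) :
      point g j = fun i => level q (g j i) := by
    simp [point]
  have hsep (g g' : Fin N → Fin n → Fin (q + 1)) (hne : g ≠ g') :
      1 / q ≤ dynDist shift N (point g) (point g') := by
    obtain ⟨j, i, hji⟩ : ∃ j i, g j i ≠ g' j i := by simpa [funext_iff] using hne
    calc 1 / (q : ℝ) ≤ |(level q (g j i) : ℝ) - level q (g' j i)| :=
          one_div_le_abs_sub_level hq hji
      _ ≤ euclidDist (point g j) (point g' j) := by
          rw [hpoint, hpoint]
          exact abs_sub_le_euclidDist (fun i => level q (g j i)) (fun i => level q (g' j i)) i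
      _ ≤ dynDist shift N (point g) (point g') := euclidDist_le_dynDist_shift hm j.2 _ _
  have hinj : Function.Injective point := fun g g' h => by
    by_contra hne
    have := (hsep g g' hne).trans (dynDist_le_of_forall le_rfl fun j _ => by rw [h, dist_self])
    exact (one_div_pos.2 (Nat.cast_pos.2 hq)).not_ge this
  refine ⟨Finset.univ.image point, ?_, ?_⟩
  · simp only [IsDynSeparated, Finset.mem_image, Finset.mem_univ, true_and]
    rintro _ ⟨g, rfl⟩ _ ⟨g', rfl⟩ hne
    exact (lt_div_iff₀ (Nat.cast_pos.2 hq)).2 (by simpa using hεq) |>.trans_le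
      (hsep g g' (ne_of_apply_ne _ hne))
  · rw [Finset.card_image_of_injective _ hinj]
    simp [← pow_mul]

lemma exists_card_le_pow : ∃ C ≥ 1, ∀ ε, 0 < ε → ε ≤ 1 → ∃ K : ℕ,
    ∀ N (E : Finset (ℤ → UnitCube n)),
      IsDynSeparated shift N ε E → (E.card : ℝ) ≤ ((C / ε) ^ n) ^ (N + K) := by
  obtain ⟨c, hc, hwin⟩ := exists_window hm
  refine ⟨√n / c + 2, by linarith [div_nonneg (Real.sqrt_nonneg n) hc.le],
    fun ε hε hε1 => ?_⟩
  obtain ⟨K, hK⟩ := hwin ε hε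
  set M := ⌊√n / (c * ε)⌋₊ + 1
  have hM : (0 : ℝ) < M := by positivity
  have hMlt : √n / (c * ε) < M := by
    simp only [M, Nat.cast_add, Nat.cast_one]; exact Nat.lt_floor_add_one _
  have hcell : √n / M ≤ c * ε := by
    rw [div_le_iff₀ hM]; rw [div_lt_iff₀ (by positivity)] at hMlt; linarith
  have hMle : (M : ℝ) ≤ √n / (c * ε) + 1 := by
    simp only [M, Nat.cast_add, Nat.cast_one]
    gcongr
    exact Nat.floor_le (by positivity)
  have hMC : (M + 1 : ℝ) ≤ (√n / c + 2) / ε := by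
    rw [le_div_iff₀ hε]
    calc (M + 1 : ℝ) * ε ≤ (√n / (c * ε) + 2) * ε :=
          mul_le_mul_of_nonneg_right (by linarith) hε.le
      _ = √n / c + 2 * ε := by field_simp
      _ ≤ √n / c + 2 := by linarith
  refine ⟨2 * K, fun N E hE => ?_⟩
  have := card_le_of_isDynSeparated_shift hε.le (Nat.cast_pos.1 hM)
    (fun x y h => hK x y fun k hk => (h k hk).trans hcell) hE
  calc (E.card : ℝ) ≤ (((M + 1 : ℕ) : ℝ) ^ n) ^ (N + 2 * K) := by exact_mod_cast this
    _ ≤ _ := by push_cast; gcongr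

lemma exists_dynS_shift_le : ∃ C > 0, ∀ ε, 0 < ε → ε ≤ 1 →
    dynS (shift (α := UnitCube n)) ε ≤ ENNReal.ofReal (n * Real.log (C / ε)) := by
  obtain ⟨C, hC, hcard⟩ := exists_card_le_pow hm
  refine ⟨C, by linarith, fun ε hε hε1 => ?_⟩
  obtain ⟨K, hK⟩ := hcard ε hε hε1
  rw [← Real.log_pow]
  exact dynS_le_ofReal_log (one_le_pow₀ ((one_le_div hε).2 (hε1.trans hC))) K fun N =>
    natCast_dynSepNum_le (hK N)

lemma ofReal_log_le_dynS_shift {ε : ℝ} (hε : 0 < ε) (hε2 : ε < 2⁻¹) :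
    ENNReal.ofReal (n * Real.log (2⁻¹ / ε)) ≤ dynS (shift (α := UnitCube n)) ε := by
  -- `dynSepNum` is a supremum in `ℕ`, so bounding it below needs the upper bound as well
  obtain ⟨C, -, hcard⟩ := exists_card_le_pow hm
  obtain ⟨K, hK⟩ := hcard ε hε (by linarith)
  set q := ⌊2⁻¹ / ε⌋₊
  have hq : 0 < q := Nat.floor_pos.2 ((one_le_div hε).2 hε2.le)
  have hεq : ε * q < 1 := by
    have : ε * q ≤ ε * (2⁻¹ / ε) := by gcongr; exact Nat.floor_le (by positivity)
    rw [mul_div_cancel₀ _ hε.ne'] at this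
    linarith
  have hlt : 2⁻¹ / ε < q + 1 := Nat.lt_floor_add_one _
  calc ENNReal.ofReal (n * Real.log (2⁻¹ / ε)) ≤ ENNReal.ofReal (Real.log ((q + 1) ^ n)) := by
        rw [Real.log_pow]
        gcongr
    _ ≤ dynS shift ε := ofReal_log_le_dynS (by positivity) fun N => by
        obtain ⟨E, hE, hcardE⟩ := exists_isDynSeparated_shift hm hq hεq N
        exact_mod_cast hcardE ▸ card_le_dynSepNum (hK N) hE

end Shift

end UnitCube

end

theorem mdim_shift_unitCube_general
    (n : ℕ)
    [m : MetricSpace (ℤ → (Fin n → (Set.Icc (0:ℝ) 1)))]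
    (hm : ∀ x y : ℤ → (Fin n → (Set.Icc (0:ℝ) 1)),
      dist x y = ∑' k : ℤ, (2:ℝ) ^ (-|k|) *
        Real.sqrt (∑ i : Fin n, ((x k i : ℝ) - (y k i : ℝ)) ^ 2)) :
    mdim (fun x : ℤ → (Fin n → (Set.Icc (0:ℝ) 1)) => fun k => x (k + 1)) = n := by
  obtain ⟨C, hC, hupper⟩ := UnitCube.exists_dynS_shift_le hm
  have hlim (c : ℝ) (hc : 0 < c) :=
    ENNReal.ofReal_natCast n ▸ tendsto_ofReal_mul_log_div_abs_log n hc
  refine (tendsto_of_tendsto_of_tendsto_of_le_of_le'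
    (hlim 2⁻¹ (by norm_num)) (hlim C hC) ?_ ?_).limsup_eq
  · filter_upwards [Ioo_mem_nhdsGT (by norm_num : (0 : ℝ) < 2⁻¹)] with ε ⟨hε, hε2⟩
    exact ENNReal.div_le_div_right (UnitCube.ofReal_log_le_dynS_shift hm hε hε2) _
  · filter_upwards [Ioo_mem_nhdsGT one_pos] with ε ⟨hε, hε1⟩
    exact ENNReal.div_le_div_right (hupper ε hε hε1.le) _

/-- The upper metric mean dimension of the shift on `([0,1]^n)^ℤ`, for the metric
`d_T(x,y) = ∑_{k ∈ ℤ} 2^{-|k|} d(x_k, y_k)` with `d` the Euclidean metric on `[0,1]^n`,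
equals `n`. -/
theorem mdim_shift_unitCube
    (n : ℕ) (hn : 1 ≤ n)
    [m : MetricSpace (ℤ → (Fin n → (Set.Icc (0:ℝ) 1)))]
    (hm : ∀ x y : ℤ → (Fin n → (Set.Icc (0:ℝ) 1)),
      dist x y = ∑' k : ℤ, (2:ℝ) ^ (-|k|) *
        Real.sqrt (∑ i : Fin n, ((x k i : ℝ) - (y k i : ℝ)) ^ 2)) :
    mdim (fun x : ℤ → (Fin n → (Set.Icc (0:ℝ) 1)) => fun k => x (k + 1)) = n :=
  mdim_shift_unitCube_general n (m := m) hm
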